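/- Let G be a countable, infinite discrete group which is either icc (every non-identity conjugacy class is infinite) or torsion-free, and let A be a finite set with at least two elements. Then every non-constant strongly irreducible subshift Z ⊆ A^G is essentially free. -/

import Mathlib

open Pointwise

section Defs

variable (G : Type*) [Group G]

/-- The right-shift of `G` on `G → A`: `(g • z) h = z (h * g)`. -/
instance (priority := high) shiftSMul (A : Type*) : SMul G (G → A) :=
  ⟨fun g z h => z (h * g)⟩

/-- The right-shift action of `G` on `G → A` is a `G`-action (the Bernoulli flow when
`A = Bool`). -/
instance shiftMulAction (A : Type*) : MulAction G (G → A) where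
  one_smul z := funext fun h => by show z (h * 1) = z h; rw [mul_one]
  mul_smul g₁ g₂ z := funext fun h => by
    show z (h * (g₁ * g₂)) = z (h * g₁ * g₂)
    rw [mul_assoc]

/-- `S ⊆ G` is `D`-separated if `Dg ∩ Dh = ∅` for all distinct `g, h ∈ S`. -/
def DSeparated (D S : Set G) : Prop :=
  ∀ g ∈ S, ∀ h ∈ S, g ≠ h → Disjoint (D * ({g} : Set G)) (D * ({h} : Set G))

/-- The separated covering property for a `G`-flow `X`: for every finite `D ⊆ G`
and every nonempty open `U ⊆ X` there is a `D`-separated `S ⊆ G` with `S⁻¹U = X`. -/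
def SCP (X : Type*) [TopologicalSpace X] [MulAction G X] : Prop :=
  ∀ D : Set G, D.Finite → ∀ U : Set X, IsOpen U → U.Nonempty →
    ∃ S : Set G, DSeparated G D S ∧ ∀ x : X, ∃ s ∈ S, s • x ∈ U

/-- A `G`-flow is minimal if every orbit is dense. -/
def IsMinimalFlow (X : Type*) [TopologicalSpace X] [MulAction G X] : Prop :=
  ∀ x : X, Dense (MulAction.orbit G x)

/-- Two `G`-flows `X` and `Y` are disjoint if the only closed `G`-invariant subset of
`X × Y` projecting onto both factors is `X × Y` itself. -/
def FlowsDisjoint (X Y : Type*) [TopologicalSpace X] [TopologicalSpace Y]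
    [MulAction G X] [MulAction G Y] : Prop :=
  ∀ J : Set (X × Y), IsClosed J → (∀ (g : G), ∀ p ∈ J, g • p ∈ J) →
    Prod.fst '' J = Set.univ → Prod.snd '' J = Set.univ → J = Set.univ

end Defs

/-- A subshift `Z ⊆ A^G` is strongly irreducible if there is a finite `D ⊆ G` such that
for all finite `E₁, E₂ ⊆ G` which are `D`-apart (`DE₁ ∩ DE₂ = ∅`) and all `z₁, z₂ ∈ Z`
there is `x ∈ Z` agreeing with `z₁` on `E₁` and with `z₂` on `E₂`. -/
def StronglyIrreducible (G : Type*) [Group G] {A : Type*} (Z : Set (G → A)) : Prop :=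
  ∃ D : Set G, D.Finite ∧
    ∀ E₁ E₂ : Set G, E₁.Finite → E₂.Finite → Disjoint (D * E₁) (D * E₂) →
      ∀ z₁ ∈ Z, ∀ z₂ ∈ Z, ∃ x ∈ Z,
        (∀ g ∈ E₁, x g = z₁ g) ∧ (∀ g ∈ E₂, x g = z₂ g)

/-!
Let `g ≠ 1` and let `z₀ ∈ Z ∩ U`, where every configuration agreeing with `z₀` on a finite set
`F` lies in `U`. If `D` witnesses strong irreducibility, it suffices to find `k` and `n` such
that `h = k gⁿ` is `D`-apart from `F ∪ {k}`: gluing `z₀` on `F ∪ {k}` with a point of `Z` whose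
value at `h` differs from `z₀ k` (possible since `Z` is non-constant) gives `x ∈ Z ∩ U` with
`x h ≠ x k`, whereas a `g`-fixed `x` is constant along `k, kg, kg², …`. Such `k, n` exist with
`n = 1` in an icc group (the conjugates `k g k⁻¹` escape every finite set) and with `k = 1` in a
torsion-free group (the powers `gⁿ` do).
-/

section Shift

variable {G A : Type*} [Group G]

theorem shift_apply (g : G) (z : G → A) (h : G) : (g • z) h = z (h * g) := rfl

theorem apply_mul_pow_of_smul_eq {g : G} {x : G → A} (hx : g • x = x) (k : G) (n : ℕ) :
    x (k * g ^ n) = x k := by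
  induction n with
  | zero => rw [pow_zero, mul_one]
  | succ n ih => rw [pow_succ, ← mul_assoc, ← shift_apply g x, hx, ih]

theorem exists_mem_apply_one_ne {Z : Set (G → A)} (hZinv : ∀ g : G, ∀ z ∈ Z, g • z ∈ Z)
    (hZnc : ¬ ∀ z ∈ Z, ∀ g h : G, z g = z h) (a : A) : ∃ y ∈ Z, y 1 ≠ a := by
  push Not at hZnc
  obtain ⟨z, hz, g, h, hgh⟩ := hZnc
  by_cases hga : z g = a
  · exact ⟨h • z, hZinv h z hz, by rw [shift_apply, one_mul, ← hga]; exact hgh.symm⟩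
  · exact ⟨g • z, hZinv g z hz, by rwa [shift_apply, one_mul]⟩

end Shift

theorem exists_finset_forall_eq_imp_mem {ι : Type*} {X : ι → Type*}
    [∀ i, TopologicalSpace (X i)] {U : Set (∀ i, X i)} (hU : IsOpen U) {z : ∀ i, X i}
    (hz : z ∈ U) : ∃ F : Finset ι, ∀ x, (∀ i ∈ F, x i = z i) → x ∈ U := by
  obtain ⟨F, u, hzu, huU⟩ := isOpen_pi_iff.1 hU z hz
  exact ⟨F, fun x hx => huU fun i hi => hx i hi ▸ (hzu i hi).2⟩

section Group

variable {G : Type*} [Group G]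

theorem Set.disjoint_mul_of_disjoint_inv_mul_mul {D E₁ E₂ : Set G}
    (h : Disjoint (D⁻¹ * D * E₁) E₂) : Disjoint (D * E₁) (D * E₂) := by
  rw [Set.disjoint_left]
  rintro _ ⟨d₁, hd₁, e₁, he₁, rfl⟩ ⟨d₂, hd₂, e₂, he₂, he : d₂ * e₂ = d₁ * e₁⟩
  have he' : d₂⁻¹ * d₁ * e₁ = e₂ := by rw [mul_assoc, ← he, inv_mul_cancel_left]
  exact Set.disjoint_left.1 h
    (he' ▸ Set.mul_mem_mul (Set.mul_mem_mul (Set.inv_mem_inv.2 hd₂) hd₁) he₁) he₂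

theorem exists_conj_notMem_of_infinite_conj {g : G} (hg : {h : G | IsConj g h}.Infinite)
    {C F : Set G} (hC : C.Finite) (hF : F.Finite) :
    ∃ k : G, k * g * k⁻¹ ∉ C ∧ k * g ∉ C * F := by
  have hT : {k : G | k * g * k⁻¹ ∉ C}.Infinite := by
    refine Set.Infinite.of_image (fun k => k * g * k⁻¹) ((hg.sdiff hC).mono ?_)
    rintro _ ⟨hconj, hnot⟩
    obtain ⟨k, rfl⟩ := isConj_iff.1 hconj
    exact ⟨k, hnot, rfl⟩
  obtain ⟨k, hkC, hkF⟩ := (hT.sdiff ((hC.mul hF).mul (Set.finite_singleton g⁻¹))).nonempty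
  exact ⟨k, hkC, fun hk => hkF ⟨k * g, hk, g⁻¹, rfl, mul_inv_cancel_right k g⟩⟩

theorem exists_pow_notMem_of_not_isOfFinOrder {g : G} (hg : ¬IsOfFinOrder g) {C : Set G}
    (hC : C.Finite) : ∃ n : ℕ, g ^ n ∉ C :=
  (hC.preimage (injective_pow_iff_not_isOfFinOrder.2 hg).injOn).infinite_compl.nonempty

theorem exists_mul_pow_notMem_mul_insert
    (hG : (∀ g : G, g ≠ 1 → {h : G | IsConj g h}.Infinite) ∨
      (∀ g : G, g ≠ 1 → ¬IsOfFinOrder g))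
    {g : G} (hg : g ≠ 1) {C F : Set G} (hC : C.Finite) (hF : F.Finite) :
    ∃ (k : G) (n : ℕ), k * g ^ n ∉ C * insert k F := by
  obtain ⟨k, n, hkk, hkF⟩ : ∃ (k : G) (n : ℕ), k * g ^ n * k⁻¹ ∉ C ∧ k * g ^ n ∉ C * F := by
    rcases hG with hicc | htf
    · obtain ⟨k, hk⟩ := exists_conj_notMem_of_infinite_conj (hicc g hg) hC hF
      exact ⟨k, 1, by simpa using hk⟩
    · obtain ⟨n, hn⟩ :=
        exists_pow_notMem_of_not_isOfFinOrder (htf g hg) (hC.union (hC.mul hF))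
      exact ⟨1, n, by simpa [not_or] using hn⟩
  refine ⟨k, n, ?_⟩
  rintro ⟨c, hc, e, rfl | he, hce⟩
  · exact hkk (by rw [← hce, mul_inv_cancel_right]; exact hc)
  · exact hkF ⟨c, hc, e, he, hce⟩

end Group

theorem strongly_irreducible_essentially_free_general
    (G : Type*) [Group G]
    (hG : (∀ g : G, g ≠ 1 → {h : G | IsConj g h}.Infinite) ∨ (∀ g : G, g ≠ 1 → ¬IsOfFinOrder g))
    (A : Type*) [TopologicalSpace A]
    (Z : Set (G → A)) (hZinv : ∀ (g : G), ∀ z ∈ Z, g • z ∈ Z)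
    (hZsi : StronglyIrreducible G Z)
    (hZnc : ¬ ∀ z ∈ Z, ∀ g h : G, z g = z h) :
    ∀ g : G, g ≠ 1 → ∀ U : Set (G → A), IsOpen U → (Z ∩ U).Nonempty →
      ∃ z ∈ Z ∩ U, g • z ≠ z := by
  rintro g hg U hU ⟨z₀, hz₀Z, hz₀U⟩
  obtain ⟨D, hD, hSI⟩ := hZsi
  obtain ⟨F, hF⟩ := exists_finset_forall_eq_imp_mem hU hz₀U
  obtain ⟨k, n, hkn⟩ := exists_mul_pow_notMem_mul_insert hG hg (hD.inv.mul hD) F.finite_toSet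
  obtain ⟨y, hyZ, hy⟩ := exists_mem_apply_one_ne hZinv hZnc (z₀ k)
  obtain ⟨x, hxZ, hx₀, hxy⟩ := hSI (insert k F) {k * g ^ n} (F.finite_toSet.insert k)
    (Set.finite_singleton _) (Set.disjoint_mul_of_disjoint_inv_mul_mul
      (Set.disjoint_singleton_right.2 hkn)) z₀ hz₀Z _ (hZinv (k * g ^ n)⁻¹ y hyZ)
  refine ⟨x, ⟨hxZ, hF x fun f hf => hx₀ f (Set.mem_insert_of_mem k hf)⟩, fun hgx => hy ?_⟩
  calc y 1 = x (k * g ^ n) := by rw [hxy _ rfl, shift_apply, mul_inv_cancel]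
    _ = x k := apply_mul_pow_of_smul_eq hgx k n
    _ = z₀ k := hx₀ k (Set.mem_insert k _)

/-- Let `G` be a countable, infinite discrete group which is icc or
torsion-free, and `A` a finite alphabet with at least two elements.  Then every
non-constant strongly irreducible subshift `Z ⊆ A^G` is essentially free (for every
`g ≠ 1`, the `g`-fixed points have empty interior relative to `Z`). -/
theorem strongly_irreducible_essentially_free
    (G : Type*) [Group G] [Countable G] [Infinite G]
    (hG : (∀ g : G, g ≠ 1 → {h : G | IsConj g h}.Infinite) ∨ (∀ g : G, g ≠ 1 → ¬IsOfFinOrder g))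
    (A : Type*) [TopologicalSpace A] [DiscreteTopology A] [Finite A] [Nontrivial A]
    (Z : Set (G → A)) (hZcl : IsClosed Z) (hZinv : ∀ (g : G), ∀ z ∈ Z, g • z ∈ Z)
    (hZsi : StronglyIrreducible G Z)
    (hZnc : ¬ ∀ z ∈ Z, ∀ g h : G, z g = z h) :
    ∀ g : G, g ≠ 1 → ∀ U : Set (G → A), IsOpen U → (Z ∩ U).Nonempty →
      ∃ z ∈ Z ∩ U, g • z ≠ z :=
  strongly_irreducible_essentially_free_general G hG A Z hZinv hZsi hZnc
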